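/- There is an absolute constant C>0 such that, in the kernel setting of the context (unit speed, r>0, t>0, λ₋=|t−r|, λ₊=t+r, δ=min{r,1/2}), for every λ with λ₋<λ<λ₊ one has ∫₀¹ |∂_λ K₂(λ,τ;r,t)| dτ ≤ C / ( (rλ)^{1/2}(λ + r − t) ) whenever λ+r−t>0 (i.e. λ>λ₋ when t≥r). -/

import Mathlib

open Real intervalIntegral

noncomputable section

/-- `φ(λ; r, t) = arccos((r² + λ² − t²)/(2rλ))`. -/
def phiK (l r t : ℝ) : ℝ := Real.arccos ((r ^ 2 + l ^ 2 - t ^ 2) / (2 * r * l))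

/-- `K₁(λ, ψ; r, t) = 1/(2π √(t² − r² − λ² + 2rλ cos ψ))`. -/
def K1 (l ψ r t : ℝ) : ℝ :=
  1 / (2 * Real.pi * Real.sqrt (t ^ 2 - r ^ 2 - l ^ 2 + 2 * r * l * Real.cos ψ))

/-- `K₂(λ, τ; r, t) = 1/(2π √(2rλτ(1−τ)(2−(1−cos φ)τ)))`. -/
def K2 (l τ r t : ℝ) : ℝ :=
  1 / (2 * Real.pi *
    Real.sqrt (2 * r * l * τ * (1 - τ) * (2 - (1 - Real.cos (phiK l r t)) * τ)))

/-- `Ψ(λ, τ; r, t) = arccos(1 − (1 − cos φ)τ)`. -/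
def PsiK (l τ r t : ℝ) : ℝ := Real.arccos (1 - (1 - Real.cos (phiK l r t)) * τ)


/-!
For `|t - r| < λ < t + r` one has `2rλ(2 - (1 - cos φ)τ) = aτ + b(1 - τ)` with
`a = (λ + r)² - t² = (λ + r - t)(λ + r + t)` and `b = 4rλ`, so
`K₂ = (2π √(τ(1-τ)) √(aτ + b(1-τ)))⁻¹` and
`|∂_λ K₂| = (2r + τ(λ - r)) / (2π) · w(τ)` with
`w(τ) = (√(τ(1-τ)) (aτ + b(1-τ))^{3/2})⁻¹ = twoSidedKernel a b τ`.
The prefactor is at most `(λ + r + t)/(2π)`. On `[0, 1/2]`, `w(τ) ≤ √2 (√τ (aτ + b/2)^{3/2})⁻¹`,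
whose primitive `2√τ / ((b/2) √(aτ + b/2))` is bounded by `4 / (b√a)`; symmetrically on
`[1/2, 1]`. As `a ≤ b`, `∫₀¹ w ≤ 8√2 / (a√b)`, and `√b = 2√(rλ)` turns the bound into
`2√2 / (π √(rλ) (λ + r - t))`, so `C = 1` works.
-/

open MeasureTheory Set

lemma mul_sqrt_self_nonneg (x : ℝ) : 0 ≤ x * √x := by
  rcases le_or_gt 0 x with hx | hx
  · positivity
  · simp [Real.sqrt_eq_zero'.2 hx.le]

def oneSidedKernel (a c s : ℝ) : ℝ := (√s * ((a * s + c) * √(a * s + c)))⁻¹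

lemma oneSidedKernel_nonneg (a c s : ℝ) : 0 ≤ oneSidedKernel a c s :=
  inv_nonneg.2 (mul_nonneg (Real.sqrt_nonneg _) (mul_sqrt_self_nonneg _))

lemma hasDerivAt_oneSidedKernel_primitive {a c s : ℝ} (ha : 0 ≤ a) (hc : 0 < c) (hs : 0 < s) :
    HasDerivAt (fun s => 2 * √s / (c * √(a * s + c))) (oneSidedKernel a c s) s := by
  have hP : 0 < a * s + c := by positivity
  have hP' : HasDerivAt (fun s => √(a * s + c)) (a / (2 * √(a * s + c))) s := by
    simpa using (((hasDerivAt_id s).const_mul a).add_const c).sqrt hP.ne'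
  refine (((Real.hasDerivAt_sqrt hs.ne').const_mul 2).div (hP'.const_mul c)
    (by positivity)).congr_deriv ?_
  have h₁ : √s ^ 2 = s := Real.sq_sqrt hs.le
  have h₂ : √(a * s + c) ^ 2 = a * s + c := Real.sq_sqrt hP.le
  have : √s ≠ 0 := by positivity
  have : √(a * s + c) ≠ 0 := by positivity
  unfold oneSidedKernel
  field_simp
  rw [h₁, h₂]
  ring

lemma integral_oneSidedKernel {a c x : ℝ} (ha : 0 ≤ a) (hc : 0 < c) (hx : 0 ≤ x) :
    IntervalIntegrable (oneSidedKernel a c) volume 0 x ∧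
      ∫ s in (0:ℝ)..x, oneSidedKernel a c s = 2 * √x / (c * √(a * x + c)) := by
  have hcont : ContinuousOn (fun s => 2 * √s / (c * √(a * s + c))) (Icc 0 x) := by
    refine ContinuousOn.div (by fun_prop) (by fun_prop) fun s hs => ?_
    have : 0 < a * s + c := by nlinarith [hs.1]
    positivity
  have hderiv : ∀ s ∈ Ioo 0 x, HasDerivAt (fun s => 2 * √s / (c * √(a * s + c)))
      (oneSidedKernel a c s) s := fun s hs => hasDerivAt_oneSidedKernel_primitive ha hc hs.1
  have hint : IntervalIntegrable (oneSidedKernel a c) volume 0 x :=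
    intervalIntegrable_deriv_of_nonneg (by rwa [uIcc_of_le hx])
      (by simpa [hx] using hderiv) fun s _ => oneSidedKernel_nonneg a c s
  refine ⟨hint, ?_⟩
  rw [integral_eq_sub_of_hasDerivAt_of_le hx hcont hderiv hint]
  simp

lemma integral_oneSidedKernel_le {a c x : ℝ} (ha : 0 < a) (hc : 0 < c) (hx : 0 ≤ x) :
    ∫ s in (0:ℝ)..x, oneSidedKernel a c s ≤ 2 / (c * √a) := by
  rw [(integral_oneSidedKernel ha.le hc hx).2, div_le_div_iff₀ (by positivity) (by positivity)]
  have : √x * √a ≤ √(a * x + c) := by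
    rw [← Real.sqrt_mul hx]
    exact Real.sqrt_le_sqrt (by nlinarith)
  nlinarith [mul_le_mul_of_nonneg_left this (by positivity : (0:ℝ) ≤ 2 * c)]

lemma sqrt_mul_le_of_le {a b : ℝ} (ha : 0 ≤ a) (hab : a ≤ b) : a * √b ≤ b * √a := by
  calc a * √b = √a * (√a * √b) := by rw [← mul_assoc, Real.mul_self_sqrt ha]
    _ ≤ √a * (√b * √b) := by gcongr
    _ = b * √a := by rw [Real.mul_self_sqrt (ha.trans hab)]; ring

def twoSidedKernel (a b τ : ℝ) : ℝ :=
  (√(τ * (1 - τ)) * ((a * τ + b * (1 - τ)) * √(a * τ + b * (1 - τ))))⁻¹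

lemma twoSidedKernel_nonneg (a b τ : ℝ) : 0 ≤ twoSidedKernel a b τ :=
  inv_nonneg.2 (mul_nonneg (Real.sqrt_nonneg _) (mul_sqrt_self_nonneg _))

lemma twoSidedKernel_symm (a b τ : ℝ) : twoSidedKernel b a (1 - τ) = twoSidedKernel a b τ := by
  unfold twoSidedKernel
  ring_nf

lemma twoSidedKernel_le_of_le_half {a b τ : ℝ} (ha : 0 ≤ a) (hb : 0 < b) (hτ₀ : 0 ≤ τ)
    (hτ : τ ≤ 1 / 2) : twoSidedKernel a b τ ≤ √2 * oneSidedKernel a (b / 2) τ := by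
  rcases hτ₀.eq_or_lt with rfl | hτ₀
  · simpa [twoSidedKernel] using mul_nonneg (Real.sqrt_nonneg 2) (oneSidedKernel_nonneg _ _ _)
  set R := a * τ + b / 2
  set P := a * τ + b * (1 - τ)
  have hR : 0 < R := by positivity
  have hRP : R ≤ P := by simp only [R, P]; nlinarith [mul_nonneg hb.le (sub_nonneg.2 hτ)]
  have h₂ : 1 ≤ √2 * √(1 - τ) := by
    rw [← Real.sqrt_mul zero_le_two]
    exact Real.one_le_sqrt.2 (by linarith)
  have hden : √τ * (R * √R) / √2 ≤ √(τ * (1 - τ)) * (P * √P) := by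
    rw [div_le_iff₀ (by positivity), Real.sqrt_mul hτ₀.le]
    calc √τ * (R * √R) ≤ √τ * (P * √P) * (√2 * √(1 - τ)) :=
          (mul_le_mul_of_nonneg_left (mul_le_mul hRP (Real.sqrt_le_sqrt hRP) (by positivity)
            (by linarith)) (by positivity)).trans
            (le_mul_of_one_le_right (mul_nonneg (by positivity) (mul_sqrt_self_nonneg P)) h₂)
      _ = √τ * √(1 - τ) * (P * √P) * √2 := by ring
  calc twoSidedKernel a b τ
      ≤ (√τ * (R * √R) / √2)⁻¹ := inv_anti₀ (by positivity) hden
    _ = √2 * oneSidedKernel a (b / 2) τ := by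
      rw [oneSidedKernel, div_eq_mul_inv, mul_inv, inv_inv, mul_comm]

lemma twoSidedKernel_le {a b τ : ℝ} (ha : 0 < a) (hb : 0 < b) (hτ : τ ∈ Icc (0:ℝ) 1) :
    twoSidedKernel a b τ ≤
      √2 * (oneSidedKernel a (b / 2) τ + oneSidedKernel b (a / 2) (1 - τ)) := by
  have := oneSidedKernel_nonneg a (b / 2) τ
  have := oneSidedKernel_nonneg b (a / 2) (1 - τ)
  rcases le_total τ (1 / 2) with h | h
  · refine (twoSidedKernel_le_of_le_half ha.le hb hτ.1 h).trans ?_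
    gcongr
    linarith
  · rw [← twoSidedKernel_symm]
    refine (twoSidedKernel_le_of_le_half hb.le ha (by linarith [hτ.2]) (by linarith)).trans ?_
    gcongr
    linarith

lemma intervalIntegrable_oneSidedKernel_one_sub {a c : ℝ} (ha : 0 ≤ a) (hc : 0 < c) :
    IntervalIntegrable (fun τ => oneSidedKernel a c (1 - τ)) volume 0 1 := by
  simpa using ((integral_oneSidedKernel ha hc zero_le_one).1.comp_sub_left 1).symm

lemma intervalIntegrable_twoSidedKernel {a b : ℝ} (ha : 0 < a) (hb : 0 < b) :
    IntervalIntegrable (twoSidedKernel a b) volume 0 1 := by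
  refine (((integral_oneSidedKernel ha.le (half_pos hb) zero_le_one).1.add
    (intervalIntegrable_oneSidedKernel_one_sub hb.le (half_pos ha))).const_mul √2).mono_fun'
    (show Measurable (twoSidedKernel a b) by unfold twoSidedKernel; fun_prop).aestronglyMeasurable
    ((ae_restrict_iff' measurableSet_uIoc).2 (.of_forall fun τ hτ => ?_))
  rw [uIoc_of_le zero_le_one] at hτ
  dsimp only
  rw [Real.norm_of_nonneg (twoSidedKernel_nonneg a b τ)]
  exact twoSidedKernel_le ha hb (Ioc_subset_Icc_self hτ)

lemma integral_twoSidedKernel_le {a b : ℝ} (ha : 0 < a) (hab : a ≤ b) :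
    ∫ τ in (0:ℝ)..1, twoSidedKernel a b τ ≤ 8 * √2 / (a * √b) := by
  have hb : 0 < b := ha.trans_le hab
  have h₁ := integral_oneSidedKernel ha.le (half_pos hb) zero_le_one
  have h₂ := intervalIntegrable_oneSidedKernel_one_sub hb.le (half_pos ha)
  calc ∫ τ in (0:ℝ)..1, twoSidedKernel a b τ
      ≤ ∫ τ in (0:ℝ)..1,
          √2 * (oneSidedKernel a (b / 2) τ + oneSidedKernel b (a / 2) (1 - τ)) :=
        integral_mono_on zero_le_one (intervalIntegrable_twoSidedKernel ha hb)
          ((h₁.1.add h₂).const_mul _) fun τ hτ => twoSidedKernel_le ha hb hτ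
    _ = √2 * ((∫ τ in (0:ℝ)..1, oneSidedKernel a (b / 2) τ) +
          ∫ τ in (0:ℝ)..1, oneSidedKernel b (a / 2) τ) := by
        rw [intervalIntegral.integral_const_mul, integral_add h₁.1 h₂, integral_comp_sub_left]
        norm_num
    _ ≤ √2 * (2 / (b / 2 * √a) + 2 / (a / 2 * √b)) := by
        gcongr
        · exact integral_oneSidedKernel_le ha (half_pos hb) zero_le_one
        · exact integral_oneSidedKernel_le hb (half_pos ha) zero_le_one
    _ ≤ √2 * (2 / (a / 2 * √b) + 2 / (a / 2 * √b)) := by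
        have : a / 2 * √b ≤ b / 2 * √a := by linarith [sqrt_mul_le_of_le ha.le hab]
        gcongr
    _ = 8 * √2 / (a * √b) := by
        field_simp
        ring

lemma cos_phiK {r t l : ℝ} (hr : 0 < r) (h₁ : |t - r| < l) (h₂ : l < t + r) :
    cos (phiK l r t) = (r ^ 2 + l ^ 2 - t ^ 2) / (2 * r * l) := by
  have hl : 0 < l := (abs_nonneg _).trans_lt h₁
  obtain ⟨h₃, h₄⟩ := abs_lt.1 h₁
  apply Real.cos_arccos
  · rw [le_div_iff₀ (by positivity)]
    nlinarith [mul_pos (by linarith : 0 < r + l - t) (by linarith : 0 < r + l + t)]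
  · rw [div_le_one (by positivity)]
    nlinarith [mul_pos (by linarith : 0 < t - (l - r)) (by linarith : 0 < t + (l - r))]

lemma K2_eq {r t l τ : ℝ} (hr : 0 < r) (h₁ : |t - r| < l) (h₂ : l < t + r)
    (hτ : τ ∈ Icc (0:ℝ) 1) :
    K2 l τ r t =
      (2 * π * √(τ * (1 - τ)) * √(((l + r) ^ 2 - t ^ 2) * τ + 4 * r * l * (1 - τ)))⁻¹ := by
  have hl : 0 < l := (abs_nonneg _).trans_lt h₁
  have hτ' : 0 ≤ τ * (1 - τ) := mul_nonneg hτ.1 (sub_nonneg.2 hτ.2)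
  rw [K2, cos_phiK hr h₁ h₂, one_div, mul_assoc (2 * π), ← Real.sqrt_mul hτ']
  congr 3
  field_simp
  ring

lemma hasDerivAt_K2 {r t l τ : ℝ} (hr : 0 < r) (h₁ : |t - r| < l) (h₂ : l < t + r)
    (hτ : τ ∈ Ioo (0:ℝ) 1) :
    HasDerivAt (fun l' => K2 l' τ r t)
      (-(2 * r + τ * (l - r)) / (2 * π) *
        twoSidedKernel ((l + r) ^ 2 - t ^ 2) (4 * r * l) τ) l := by
  set Q : ℝ → ℝ := fun l' => ((l' + r) ^ 2 - t ^ 2) * τ + 4 * r * l' * (1 - τ)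
  set u := √(τ * (1 - τ))
  set c := 2 * π * u
  have hl : 0 < l := (abs_nonneg _).trans_lt h₁
  obtain ⟨hτ₀, hτ₁⟩ := hτ
  have hc : 0 < c := by
    have : 0 < τ * (1 - τ) := by nlinarith
    positivity
  have hQ : 0 < Q l := by
    have : 0 < (l + r) ^ 2 - t ^ 2 := by nlinarith [abs_lt.1 h₁]
    have : 0 < 1 - τ := by linarith
    positivity
  have hev : (fun l' => K2 l' τ r t) =ᶠ[nhds l] fun l' => (c * √(Q l'))⁻¹ := by
    filter_upwards [Ioo_mem_nhds h₁ h₂] with l' hl'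
    exact K2_eq hr hl'.1 hl'.2 ⟨hτ₀.le, hτ₁.le⟩
  have hQ' : HasDerivAt Q (2 * (2 * r + τ * (l - r))) l := by
    have h := ((((hasDerivAt_id' l).add_const r).fun_pow 2).sub_const (t ^ 2)).mul_const τ
      |>.fun_add (((hasDerivAt_id' l).const_mul (4 * r)).mul_const (1 - τ))
    exact h.congr_deriv (by push_cast; ring)
  refine (((hQ'.sqrt hQ.ne').const_mul c).inv (by positivity)).congr_of_eventuallyEq hev
    |>.congr_deriv ?_
  have hsQ : √(Q l) ^ 2 = Q l := Real.sq_sqrt hQ.le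
  have : √(Q l) ≠ 0 := by positivity
  have hm : twoSidedKernel ((l + r) ^ 2 - t ^ 2) (4 * r * l) τ = (u * (Q l * √(Q l)))⁻¹ := rfl
  have : u ≠ 0 := by positivity
  rw [hm]
  field_simp
  rw [hsQ]
  ring

lemma deriv_K2 {r t l τ : ℝ} (hr : 0 < r) (h₁ : |t - r| < l) (h₂ : l < t + r)
    (hτ : τ ∈ Icc (0:ℝ) 1) :
    deriv (fun l' => K2 l' τ r t) l =
      -(2 * r + τ * (l - r)) / (2 * π) * twoSidedKernel ((l + r) ^ 2 - t ^ 2) (4 * r * l) τ := by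
  -- at `τ = 0` and `τ = 1` both sides vanish, through `(x * 0)⁻¹ = 0`
  rcases hτ.1.eq_or_lt with rfl | hτ₀
  · simp [K2, twoSidedKernel]
  rcases hτ.2.eq_or_lt with rfl | hτ₁
  · simp [K2, twoSidedKernel]
  exact (hasDerivAt_K2 hr h₁ h₂ ⟨hτ₀, hτ₁⟩).deriv

lemma abs_deriv_K2 {r t l τ : ℝ} (hr : 0 < r) (h₁ : |t - r| < l) (h₂ : l < t + r)
    (hτ : τ ∈ Icc (0:ℝ) 1) :
    |deriv (fun l' => K2 l' τ r t) l| =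
      (2 * r + τ * (l - r)) / (2 * π) * twoSidedKernel ((l + r) ^ 2 - t ^ 2) (4 * r * l) τ := by
  have hl : 0 < l := (abs_nonneg _).trans_lt h₁
  have : 0 ≤ 2 * r + τ * (l - r) := by nlinarith [hτ.1, hτ.2]
  have := twoSidedKernel_nonneg ((l + r) ^ 2 - t ^ 2) (4 * r * l) τ
  rw [deriv_K2 hr h₁ h₂ hτ, neg_div, neg_mul, abs_neg, abs_of_nonneg (by positivity)]

lemma integral_abs_deriv_K2_le {r t l : ℝ} (hr : 0 < r) (ht : 0 < t) (h₁ : |t - r| < l)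
    (h₂ : l < t + r) :
    ∫ τ in (0:ℝ)..1, |deriv (fun l' => K2 l' τ r t) l| ≤
      (l + r + t) / (2 * π) * (8 * √2 / (((l + r) ^ 2 - t ^ 2) * √(4 * r * l))) := by
  have hl : 0 < l := (abs_nonneg _).trans_lt h₁
  obtain ⟨h₃, h₄⟩ := abs_lt.1 h₁
  have ha : 0 < (l + r) ^ 2 - t ^ 2 := by nlinarith
  have hab : (l + r) ^ 2 - t ^ 2 ≤ 4 * r * l := by
    nlinarith [mul_pos (by linarith : 0 < t - (l - r)) (by linarith : 0 < t + (l - r))]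
  have hint := intervalIntegrable_twoSidedKernel ha (ha.trans_le hab)
  calc (∫ τ in (0:ℝ)..1, |deriv (fun l' => K2 l' τ r t) l|)
      = ∫ τ in (0:ℝ)..1,
          (2 * r + τ * (l - r)) / (2 * π) * twoSidedKernel ((l + r) ^ 2 - t ^ 2) (4 * r * l) τ :=
        integral_congr fun τ hτ =>
          abs_deriv_K2 hr h₁ h₂ (by rwa [uIcc_of_le zero_le_one] at hτ)
    _ ≤ ∫ τ in (0:ℝ)..1,
          (l + r + t) / (2 * π) * twoSidedKernel ((l + r) ^ 2 - t ^ 2) (4 * r * l) τ := by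
        refine integral_mono_on zero_le_one (hint.continuousOn_mul (by fun_prop))
          (hint.const_mul _) fun τ hτ => ?_
        have : 2 * r + τ * (l - r) ≤ l + r + t := by nlinarith [hτ.1, hτ.2]
        gcongr
        exact twoSidedKernel_nonneg _ _ _
    _ = (l + r + t) / (2 * π) *
          ∫ τ in (0:ℝ)..1, twoSidedKernel ((l + r) ^ 2 - t ^ 2) (4 * r * l) τ :=
        intervalIntegral.integral_const_mul _ _
    _ ≤ _ := by
        gcongr
        exact integral_twoSidedKernel_le ha hab

/-- bound for the `λ`-derivative of the kernel `K₂`. -/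
theorem stmt11 :
    ∃ C : ℝ, 0 < C ∧ ∀ r t l : ℝ, 0 < r → 0 < t → |t - r| < l → l < t + r →
      0 < l + r - t →
      (∫ τ in (0:ℝ)..1, |deriv (fun l' => K2 l' τ r t) l|)
        ≤ C / (Real.sqrt (r * l) * (l + r - t)) := by
  refine ⟨1, one_pos, fun r t l hr ht h₁ h₂ h₃ =>
    (integral_abs_deriv_K2_le hr ht h₁ h₂).trans ?_⟩
  have hl : 0 < l := (abs_nonneg _).trans_lt h₁
  have h4rl : √(4 * r * l) = 2 * √(r * l) := by
    rw [show 4 * r * l = 2 ^ 2 * (r * l) by ring, Real.sqrt_mul (by norm_num),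
      Real.sqrt_sq zero_le_two]
  calc (l + r + t) / (2 * π) * (8 * √2 / (((l + r) ^ 2 - t ^ 2) * √(4 * r * l)))
      = 2 * √2 / π / (√(r * l) * (l + r - t)) := by
        rw [h4rl, show (l + r) ^ 2 - t ^ 2 = (l + r - t) * (l + r + t) by ring]
        have : 0 < √(r * l) := by positivity
        field_simp
        norm_num
    _ ≤ 1 / (√(r * l) * (l + r - t)) := by
        gcongr
        rw [div_le_one pi_pos]
        linarith [sqrt_two_lt_three_halves, pi_gt_three]
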